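/- The right A-module ε spanned by {e_l : l ∈ ℤ} with action e_l · a_{mj} = e^{iλm(l−j)} e_{l−j} satisfies the counit axiom: both (ε ⊗ A) ⊗_{A⊗A} Δ and (A ⊗ ε) ⊗_{A⊗A} Δ are isomorphic to A as (A,A)-bimodules. -/

import Mathlib

/-!
Balancing by `a_{-n₁,-l} ⊗ a_{-n₂,k+l}` carries `d_{n₁n₂k}` to `d_{000}` and `e_l` to `e_0`, so in
`(ε ⊗ A) ⊗_{A⊗A} Δ` every `(e_l ⊗ a_{mj}) ⊗ d_{n₁n₂k}` is a phase times the normal form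
`(e_0 ⊗ a_{m+n₂, j-k-l}) ⊗ d_{000}`. Reading off that phase and that element of `A` defines a linear
map `(ε ⊗ A) ⊗ Δ → A`; a computation on basis vectors shows that it kills the balancing relations and
intertwines the two actions, and `a ↦ (e_0 ⊗ a) ⊗ d_{000}` is a section of it, so it descends to a
bimodule isomorphism. `(A ⊗ ε) ⊗_{A⊗A} Δ` is the same module after swapping the factors of `A ⊗ ε`
and of `A ⊗ A`, together with the indices `n₁, n₂` of `Δ`.
-/

open TensorProduct MulOpposite

section

variable {A E D : Type} [Ring A] [Algebra ℂ A]
  [AddCommGroup E] [Module ℂ E] [AddCommGroup D] [Module ℂ D]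

/-- Relations of the balanced tensor product `(ε ⊗ A) ⊗_{A⊗A} Δ` inside
`(ε ⊗ A) ⊗ Δ` (tensor products over `ℂ`). -/
noncomputable def counitRelL (rhoL : TensorProduct ℂ A A →ₐ[ℂ] Module.End ℂ D)
    (rhoE : Aᵐᵒᵖ →ₐ[ℂ] Module.End ℂ E) :
    Submodule ℂ (TensorProduct ℂ (TensorProduct ℂ E A) D) :=
  Submodule.span ℂ {z | ∃ (x : TensorProduct ℂ E A) (δ : D) (b₁ b₂ : A),
    z = (TensorProduct.map (rhoE (op b₁)) (LinearMap.mulRight ℂ b₂) x) ⊗ₜ[ℂ] δ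
        - x ⊗ₜ[ℂ] (rhoL (b₁ ⊗ₜ[ℂ] b₂) δ)}

/-- Relations of the balanced tensor product `(A ⊗ ε) ⊗_{A⊗A} Δ` inside
`(A ⊗ ε) ⊗ Δ`. -/
noncomputable def counitRelR (rhoL : TensorProduct ℂ A A →ₐ[ℂ] Module.End ℂ D)
    (rhoE : Aᵐᵒᵖ →ₐ[ℂ] Module.End ℂ E) :
    Submodule ℂ (TensorProduct ℂ (TensorProduct ℂ A E) D) :=
  Submodule.span ℂ {z | ∃ (x : TensorProduct ℂ A E) (δ : D) (b₁ b₂ : A),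
    z = (TensorProduct.map (LinearMap.mulRight ℂ b₁) (rhoE (op b₂)) x) ⊗ₜ[ℂ] δ
        - x ⊗ₜ[ℂ] (rhoL (b₁ ⊗ₜ[ℂ] b₂) δ)}

/-- Left action of `c ∈ A` on `(ε ⊗ A) ⊗ Δ` (on the `A` factor). -/
noncomputable def counitLactL (c : A) :
    TensorProduct ℂ (TensorProduct ℂ E A) D →ₗ[ℂ] TensorProduct ℂ (TensorProduct ℂ E A) D :=
  TensorProduct.map (TensorProduct.map LinearMap.id (LinearMap.mulLeft ℂ c)) LinearMap.id

/-- Left action of `c ∈ A` on `(A ⊗ ε) ⊗ Δ` (on the `A` factor). -/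
noncomputable def counitLactR (c : A) :
    TensorProduct ℂ (TensorProduct ℂ A E) D →ₗ[ℂ] TensorProduct ℂ (TensorProduct ℂ A E) D :=
  TensorProduct.map (TensorProduct.map (LinearMap.mulLeft ℂ c) LinearMap.id) LinearMap.id

/-- Right action of `c ∈ A` on `(ε ⊗ A) ⊗ Δ` (on the `Δ` factor). -/
noncomputable def counitRactL (rhoR : Aᵐᵒᵖ →ₐ[ℂ] Module.End ℂ D) (c : A) :
    TensorProduct ℂ (TensorProduct ℂ E A) D →ₗ[ℂ] TensorProduct ℂ (TensorProduct ℂ E A) D :=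
  TensorProduct.map LinearMap.id (rhoR (op c))

/-- Right action of `c ∈ A` on `(A ⊗ ε) ⊗ Δ` (on the `Δ` factor). -/
noncomputable def counitRactR (rhoR : Aᵐᵒᵖ →ₐ[ℂ] Module.End ℂ D) (c : A) :
    TensorProduct ℂ (TensorProduct ℂ A E) D →ₗ[ℂ] TensorProduct ℂ (TensorProduct ℂ A E) D :=
  TensorProduct.map LinearMap.id (rhoR (op c))

end


theorem Submodule.exists_quotEquiv_of_section {R M N : Type*} [Ring R] [AddCommGroup M]
    [Module R M] [AddCommGroup N] [Module R N] (p : Submodule R M) (f : M →ₗ[R] N)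
    (g : N →ₗ[R] M) (hp : p ≤ LinearMap.ker f) (hfg : f ∘ₗ g = LinearMap.id)
    (hgf : p.mkQ ∘ₗ g ∘ₗ f = p.mkQ) :
    ∃ e : (M ⧸ p) ≃ₗ[R] N, ∀ x, e (Submodule.Quotient.mk x) = f x :=
  ⟨.ofLinearMap (p.liftQ f hp) (p.mkQ ∘ₗ g) (by rw [← LinearMap.comp_assoc, p.liftQ_mkQ, hfg])
    (p.linearMap_qext (by rw [LinearMap.comp_assoc, p.liftQ_mkQ, LinearMap.comp_assoc, hgf,
      LinearMap.id_comp])), fun _ => rfl⟩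

section

variable {A E D : Type} [Ring A] [Algebra ℂ A]
  [AddCommGroup E] [Module ℂ E] [AddCommGroup D] [Module ℂ D]

def IsRotationBasis (lam : ℝ) (b : Module.Basis (ℤ × ℤ) ℂ A) : Prop :=
  ∀ n₁ l₁ n₂ l₂ : ℤ,
    b (n₁, l₁) * b (n₂, l₂) = Complex.exp (Complex.I * (lam * n₁ * l₂)) • b (n₁ + n₂, l₁ + l₂)

def IsCoproductLeftAction (lam : ℝ) (b : Module.Basis (ℤ × ℤ) ℂ A)
    (bd : Module.Basis (ℤ × ℤ × ℤ) ℂ D) (rhoL : A ⊗[ℂ] A →ₐ[ℂ] Module.End ℂ D) : Prop :=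
  ∀ m₁ j₁ m₂ j₂ n₁ n₂ l : ℤ,
    rhoL (b (m₁, j₁) ⊗ₜ[ℂ] b (m₂, j₂)) (bd (n₁, n₂, l)) =
      Complex.exp (-(Complex.I * (lam * (((n₁ + m₁) * j₁ + (n₂ + m₂) * j₂ : ℤ) : ℝ)))) •
        bd (n₁ + m₁, n₂ + m₂, l - j₁ - j₂)

def IsCoproductRightAction (lam : ℝ) (b : Module.Basis (ℤ × ℤ) ℂ A)
    (bd : Module.Basis (ℤ × ℤ × ℤ) ℂ D) (rhoR : Aᵐᵒᵖ →ₐ[ℂ] Module.End ℂ D) : Prop :=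
  ∀ m j n₁ n₂ l : ℤ,
    rhoR (op (b (m, j))) (bd (n₁, n₂, l)) =
      Complex.exp (Complex.I * (lam * (((m * (l - j)) : ℤ) : ℝ))) • bd (n₁ + m, n₂ + m, l - j)

def IsCounitAction (lam : ℝ) (b : Module.Basis (ℤ × ℤ) ℂ A) (be : Module.Basis ℤ ℂ E)
    (rhoE : Aᵐᵒᵖ →ₐ[ℂ] Module.End ℂ E) : Prop :=
  ∀ m j l : ℤ,
    rhoE (op (b (m, j))) (be l) =
      Complex.exp (Complex.I * (lam * (((m * (l - j)) : ℤ) : ℝ))) • be (l - j)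

end

section CounitLeft

variable {A E D : Type} [Ring A] [Algebra ℂ A]
  [AddCommGroup E] [Module ℂ E] [AddCommGroup D] [Module ℂ D]
  (lam : ℝ) (b : Module.Basis (ℤ × ℤ) ℂ A) (be : Module.Basis ℤ ℂ E)
  (bd : Module.Basis (ℤ × ℤ × ℤ) ℂ D)

noncomputable def counitProjL : (E ⊗[ℂ] A) ⊗[ℂ] D →ₗ[ℂ] A :=
  ((be.tensorProduct b).tensorProduct bd).constr ℂ fun ⟨⟨l, m, j⟩, n₁, n₂, k⟩ =>
    Complex.exp (Complex.I * (lam * ((n₁ * l - (m + n₂) * (k + l) : ℤ) : ℝ))) •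
      b (m + n₂, j - k - l)

theorem counitProjL_tmul (l m j n₁ n₂ k : ℤ) :
    counitProjL lam b be bd ((be l ⊗ₜ b (m, j)) ⊗ₜ bd (n₁, n₂, k)) =
      Complex.exp (Complex.I * (lam * ((n₁ * l - (m + n₂) * (k + l) : ℤ) : ℝ))) •
        b (m + n₂, j - k - l) := by
  rw [← Module.Basis.tensorProduct_apply, ← Module.Basis.tensorProduct_apply]
  exact Module.Basis.constr_basis _ _ _ _

variable {lam b be bd}

theorem counitRelL_le_ker_counitProjL {rhoL : A ⊗[ℂ] A →ₐ[ℂ] Module.End ℂ D}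
    {rhoE : Aᵐᵒᵖ →ₐ[ℂ] Module.End ℂ E} (hmul : IsRotationBasis lam b)
    (hL : IsCoproductLeftAction lam b bd rhoL) (hE : IsCounitAction lam b be rhoE) :
    counitRelL rhoL rhoE ≤ LinearMap.ker (counitProjL lam b be bd) := by
  set φ := counitProjL lam b be bd
  let F : A →ₗ[ℂ] A →ₗ[ℂ] (E ⊗[ℂ] A) ⊗[ℂ] D →ₗ[ℂ] A :=
    ((mapBilinear (RingHom.id ℂ) E A E A).compl₁₂
      (rhoE.toLinearMap ∘ₗ (opLinearEquiv ℂ).toLinearMap) (LinearMap.mul ℂ A).flip).compr₂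
      (LinearMap.llcomp ℂ _ _ _ φ ∘ₗ LinearMap.rTensorHom D)
  let G : A →ₗ[ℂ] A →ₗ[ℂ] (E ⊗[ℂ] A) ⊗[ℂ] D →ₗ[ℂ] A :=
    (TensorProduct.mk ℂ A A).compr₂
      (LinearMap.llcomp ℂ _ _ _ φ ∘ₗ LinearMap.lTensorHom _ ∘ₗ rhoL.toLinearMap)
  -- `F b₁ b₂` and `G b₁ b₂` are the two sides of the balancing relation, composed with `φ`
  have hFG : F = G := by
    refine LinearMap.ext_basis b b fun ⟨m₁, j₁⟩ ⟨m₂, j₂⟩ =>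
      ((be.tensorProduct b).tensorProduct bd).ext fun ⟨⟨l, m, j⟩, n₁, n₂, k⟩ => ?_
    simp only [F, G, φ, LinearMap.compr₂_apply, LinearMap.compl₁₂_apply, LinearMap.coe_comp,
      AlgHom.coe_toLinearMap, LinearEquiv.coe_coe, coe_opLinearEquiv, Function.comp_apply,
      mapBilinear_apply, LinearMap.coe_rTensorHom, LinearMap.coe_lTensorHom,
      LinearMap.llcomp_apply, Module.Basis.tensorProduct_apply, mk_apply, map_tmul,
      LinearMap.rTensor_tmul, LinearMap.lTensor_tmul, LinearMap.flip_apply,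
      LinearMap.mul_apply_apply, hE _ _ _, hmul _ _ _ _, hL _ _ _ _ _ _ _, ← smul_tmul', tmul_smul,
      map_smul, counitProjL_tmul, smul_smul, ← Complex.exp_add]
    congr 1
    · congr 1; push_cast; ring
    · congr 2 <;> ring
  rw [counitRelL, Submodule.span_le]
  rintro _ ⟨x, δ, b₁, b₂, rfl⟩
  rw [SetLike.mem_coe, LinearMap.mem_ker, map_sub, sub_eq_zero]
  exact congr($hFG b₁ b₂ (x ⊗ₜ δ))

theorem counitProjL_counitLactL (hmul : IsRotationBasis lam b) (c : A)
    (z : (E ⊗[ℂ] A) ⊗[ℂ] D) :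
    counitProjL lam b be bd (counitLactL c z) = c * counitProjL lam b be bd z := by
  set φ := counitProjL lam b be bd
  let F : A →ₗ[ℂ] (E ⊗[ℂ] A) ⊗[ℂ] D →ₗ[ℂ] A :=
    (LinearMap.rTensorHom D ∘ₗ LinearMap.lTensorHom E ∘ₗ LinearMap.mul ℂ A).compr₂ φ
  have hF : F = (LinearMap.mul ℂ A).compl₂ φ := by
    refine LinearMap.ext_basis b ((be.tensorProduct b).tensorProduct bd)
      fun ⟨mc, jc⟩ ⟨⟨l, m, j⟩, n₁, n₂, k⟩ => ?_
    simp only [F, φ, LinearMap.compr₂_apply, LinearMap.compl₂_apply, LinearMap.coe_comp,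
      Function.comp_apply, LinearMap.coe_rTensorHom, LinearMap.coe_lTensorHom,
      Module.Basis.tensorProduct_apply, LinearMap.rTensor_tmul, LinearMap.lTensor_tmul,
      LinearMap.mul_apply_apply, hmul _ _ _ _, ← smul_tmul', tmul_smul, map_smul,
      counitProjL_tmul, smul_smul, ← Complex.exp_add]
    congr 1
    · congr 1; push_cast; ring
    · congr 2 <;> ring
  exact congr($hF c z)

theorem counitProjL_counitRactL {rhoR : Aᵐᵒᵖ →ₐ[ℂ] Module.End ℂ D}
    (hmul : IsRotationBasis lam b) (hR : IsCoproductRightAction lam b bd rhoR) (c : A)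
    (z : (E ⊗[ℂ] A) ⊗[ℂ] D) :
    counitProjL lam b be bd (counitRactL rhoR c z) = counitProjL lam b be bd z * c := by
  set φ := counitProjL lam b be bd
  let F : A →ₗ[ℂ] (E ⊗[ℂ] A) ⊗[ℂ] D →ₗ[ℂ] A :=
    (LinearMap.lTensorHom _ ∘ₗ rhoR.toLinearMap ∘ₗ (opLinearEquiv ℂ).toLinearMap).compr₂ φ
  have hF : F = (LinearMap.mul ℂ A).flip.compl₂ φ := by
    refine LinearMap.ext_basis b ((be.tensorProduct b).tensorProduct bd)
      fun ⟨mc, jc⟩ ⟨⟨l, m, j⟩, n₁, n₂, k⟩ => ?_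
    simp only [F, φ, LinearMap.compr₂_apply, LinearMap.compl₂_apply, LinearMap.coe_comp,
      Function.comp_apply, LinearMap.coe_lTensorHom, AlgHom.coe_toLinearMap, LinearEquiv.coe_coe,
      coe_opLinearEquiv, Module.Basis.tensorProduct_apply, LinearMap.lTensor_tmul,
      LinearMap.flip_apply, LinearMap.mul_apply_apply, hR _ _ _ _ _, tmul_smul, map_smul,
      counitProjL_tmul, smul_smul, hmul _ _ _ _, ← Complex.exp_add]
    congr 1
    · congr 1; push_cast; ring
    · congr 2 <;> ring
  exact congr($hF c z)

theorem counitRelL_mk_map_tmul (rhoL : A ⊗[ℂ] A →ₐ[ℂ] Module.End ℂ D)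
    (rhoE : Aᵐᵒᵖ →ₐ[ℂ] Module.End ℂ E) (x : E ⊗[ℂ] A) (δ : D) (b₁ b₂ : A) :
    (Submodule.Quotient.mk (map (rhoE (op b₁)) (LinearMap.mulRight ℂ b₂) x ⊗ₜ δ) :
        _ ⧸ counitRelL rhoL rhoE) =
      Submodule.Quotient.mk (x ⊗ₜ rhoL (b₁ ⊗ₜ b₂) δ) :=
  (Submodule.Quotient.eq _).2 (Submodule.subset_span ⟨x, δ, b₁, b₂, rfl⟩)

theorem counitRelL_mk_tmul_counitProjL {rhoL : A ⊗[ℂ] A →ₐ[ℂ] Module.End ℂ D}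
    {rhoE : Aᵐᵒᵖ →ₐ[ℂ] Module.End ℂ E} (hmul : IsRotationBasis lam b)
    (hL : IsCoproductLeftAction lam b bd rhoL) (hE : IsCounitAction lam b be rhoE)
    (l m j n₁ n₂ k : ℤ) :
    (Submodule.Quotient.mk
        ((be 0 ⊗ₜ counitProjL lam b be bd ((be l ⊗ₜ b (m, j)) ⊗ₜ bd (n₁, n₂, k))) ⊗ₜ
          bd (0, 0, 0)) : _ ⧸ counitRelL rhoL rhoE) =
      Submodule.Quotient.mk ((be l ⊗ₜ b (m, j)) ⊗ₜ bd (n₁, n₂, k)) := by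
  have hδ : rhoL (b (-n₁, -l) ⊗ₜ b (-n₂, k + l)) (bd (n₁, n₂, k)) = bd (0, 0, 0) := by
    rw [hL, show k - -l - (k + l) = 0 by ring]
    simp
  have hx : map (rhoE (op (b (-n₁, -l)))) (LinearMap.mulRight ℂ (b (-n₂, k + l)))
      (be 0 ⊗ₜ b (m + n₂, j - k - l)) =
        Complex.exp (Complex.I * (lam * ((-n₁ * l + (m + n₂) * (k + l) : ℤ) : ℝ))) •
          (be l ⊗ₜ b (m, j)) := by
    simp only [map_tmul, LinearMap.mulRight_apply, hE _ _ _, hmul _ _ _ _, ← smul_tmul',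
      tmul_smul, smul_smul, ← Complex.exp_add, zero_sub, neg_neg, add_neg_cancel_right, sub_sub,
      sub_add_cancel]
    congr 2
    push_cast
    ring
  rw [counitProjL_tmul, tmul_smul, ← smul_tmul', Submodule.Quotient.mk_smul, ← hδ,
    ← counitRelL_mk_map_tmul, hx, ← smul_tmul', Submodule.Quotient.mk_smul, smul_smul,
    ← Complex.exp_add]
  convert one_smul ℂ _
  rw [← Complex.exp_zero]
  congr 1
  push_cast
  ring

theorem counit_axiom_left {rhoL : A ⊗[ℂ] A →ₐ[ℂ] Module.End ℂ D}
    {rhoR : Aᵐᵒᵖ →ₐ[ℂ] Module.End ℂ D} {rhoE : Aᵐᵒᵖ →ₐ[ℂ] Module.End ℂ E}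
    (hmul : IsRotationBasis lam b) (hL : IsCoproductLeftAction lam b bd rhoL)
    (hR : IsCoproductRightAction lam b bd rhoR) (hE : IsCounitAction lam b be rhoE) :
    ∃ Φ : ((E ⊗[ℂ] A) ⊗[ℂ] D ⧸ counitRelL rhoL rhoE) ≃ₗ[ℂ] A, ∀ c : A, ∀ z,
      Φ (Submodule.Quotient.mk (counitLactL c z)) = c * Φ (Submodule.Quotient.mk z) ∧
      Φ (Submodule.Quotient.mk (counitRactL rhoR c z)) = Φ (Submodule.Quotient.mk z) * c := by
  obtain ⟨Φ, hΦ⟩ := (counitRelL rhoL rhoE).exists_quotEquiv_of_section (counitProjL lam b be bd)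
    ((TensorProduct.mk ℂ _ D).flip (bd (0, 0, 0)) ∘ₗ TensorProduct.mk ℂ E A (be 0))
    (counitRelL_le_ker_counitProjL hmul hL hE)
    (b.ext fun ⟨m, j⟩ => by simpa using counitProjL_tmul lam b be bd 0 m j 0 0 0)
    (((be.tensorProduct b).tensorProduct bd).ext fun ⟨⟨l, m, j⟩, n₁, n₂, k⟩ => by
      simpa using counitRelL_mk_tmul_counitProjL hmul hL hE l m j n₁ n₂ k)
  refine ⟨Φ, fun c z => ?_⟩
  rw [hΦ, hΦ, hΦ]
  exact ⟨counitProjL_counitLactL hmul c z, counitProjL_counitRactL hmul hR c z⟩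

end CounitLeft

section CounitRight

variable {A E D : Type} [Ring A] [Algebra ℂ A]
  [AddCommGroup E] [Module ℂ E] [AddCommGroup D] [Module ℂ D]

theorem map_rTensor_comm_counitRelR (rhoL : A ⊗[ℂ] A →ₐ[ℂ] Module.End ℂ D)
    (rhoE : Aᵐᵒᵖ →ₐ[ℂ] Module.End ℂ E) :
    (counitRelR rhoL rhoE).map (LinearEquiv.rTensor D (TensorProduct.comm ℂ A E) :
        (A ⊗[ℂ] E) ⊗[ℂ] D →ₗ[ℂ] (E ⊗[ℂ] A) ⊗[ℂ] D) =
      counitRelL (rhoL.comp (Algebra.TensorProduct.comm ℂ A A)) rhoE := by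
  rw [counitRelR, counitRelL, Submodule.map_span]
  congr 1
  ext z
  constructor
  · rintro ⟨_, ⟨x, δ, b₁, b₂, rfl⟩, rfl⟩
    exact ⟨TensorProduct.comm ℂ A E x, δ, b₂, b₁, by simp [map_comm]⟩
  · rintro ⟨x, δ, b₂, b₁, rfl⟩
    refine ⟨_, ⟨(TensorProduct.comm ℂ A E).symm x, δ, b₁, b₂, rfl⟩, ?_⟩
    simp [map_comm]

theorem rTensor_comm_counitLactR (c : A) (z : (A ⊗[ℂ] E) ⊗[ℂ] D) :
    LinearEquiv.rTensor D (TensorProduct.comm ℂ A E) (counitLactR c z) =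
      counitLactL c (LinearEquiv.rTensor D (TensorProduct.comm ℂ A E) z) := by
  induction z using TensorProduct.induction_on with
  | zero => simp
  | tmul x δ =>
    induction x using TensorProduct.induction_on with
    | zero => simp
    | tmul a e => simp [counitLactR, counitLactL]
    | add x y hx hy => simp_all [add_tmul]
  | add x y hx hy => simp_all

theorem rTensor_comm_counitRactR (rhoR : Aᵐᵒᵖ →ₐ[ℂ] Module.End ℂ D) (c : A)
    (z : (A ⊗[ℂ] E) ⊗[ℂ] D) :
    LinearEquiv.rTensor D (TensorProduct.comm ℂ A E) (counitRactR rhoR c z) =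
      counitRactL rhoR c (LinearEquiv.rTensor D (TensorProduct.comm ℂ A E) z) :=
  congr($((LinearMap.rTensor_comp_lTensor _ _ _).trans
    (LinearMap.lTensor_comp_rTensor _ _ _).symm) z)

theorem counit_axiom_right {lam : ℝ} {b : Module.Basis (ℤ × ℤ) ℂ A} {be : Module.Basis ℤ ℂ E}
    {bd : Module.Basis (ℤ × ℤ × ℤ) ℂ D} {rhoL : A ⊗[ℂ] A →ₐ[ℂ] Module.End ℂ D}
    {rhoR : Aᵐᵒᵖ →ₐ[ℂ] Module.End ℂ D} {rhoE : Aᵐᵒᵖ →ₐ[ℂ] Module.End ℂ E}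
    (hmul : IsRotationBasis lam b) (hL : IsCoproductLeftAction lam b bd rhoL)
    (hR : IsCoproductRightAction lam b bd rhoR) (hE : IsCounitAction lam b be rhoE) :
    ∃ Ψ : (@HasQuotient.Quotient ((A ⊗[ℂ] E) ⊗[ℂ] D) _ Submodule.hasQuotient
        (counitRelR rhoL rhoE)) ≃ₗ[ℂ] A, ∀ c : A, ∀ z,
      Ψ (Submodule.Quotient.mk (counitLactR c z)) = c * Ψ (Submodule.Quotient.mk z) ∧
      Ψ (Submodule.Quotient.mk (counitRactR rhoR c z)) = Ψ (Submodule.Quotient.mk z) * c := by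
  let σ : ℤ × ℤ × ℤ ≃ ℤ × ℤ × ℤ :=
    ⟨fun p => (p.2.1, p.1, p.2.2), fun p => (p.2.1, p.1, p.2.2), fun _ => rfl, fun _ => rfl⟩
  have hL' : IsCoproductLeftAction lam b (bd.reindex σ)
      (rhoL.comp (Algebra.TensorProduct.comm ℂ A A)) := fun m₁ j₁ m₂ j₂ n₁ n₂ l => by
    simp only [σ, AlgHom.coe_comp, AlgEquiv.coe_toAlgHom, Function.comp_apply,
      Algebra.TensorProduct.comm_tmul, Module.Basis.coe_reindex, Equiv.symm_mk, Equiv.coe_fn_mk,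
      hL _ _ _ _ _ _ _]
    rw [add_comm ((n₂ + m₂) * j₂), sub_right_comm]
  have hR' : IsCoproductRightAction lam b (bd.reindex σ) rhoR := fun m j n₁ n₂ l => by
    simp [σ, hR _ _ _ _ _]
  obtain ⟨Φ, hΦ⟩ := counit_axiom_left hmul hL' hR' hE
  refine ⟨(Submodule.Quotient.equiv _ _ _ (map_rTensor_comm_counitRelR rhoL rhoE)).trans Φ,
    fun c z => ?_⟩
  simp only [LinearEquiv.trans_apply, Submodule.Quotient.equiv_apply, Submodule.mapQ_apply,
    LinearEquiv.coe_coe, rTensor_comm_counitLactR, rTensor_comm_counitRactR]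
  exact hΦ c _

end CounitRight

theorem counit_axiom
    (lam : ℝ)
    (A : Type) [Ring A] [Algebra ℂ A]
    (a : ℤ → ℤ → A)
    (b : Module.Basis (ℤ × ℤ) ℂ A) (hb : ∀ n l : ℤ, b (n, l) = a n l)
    (hmul : ∀ n₁ l₁ n₂ l₂ : ℤ,
      a n₁ l₁ * a n₂ l₂ =
        Complex.exp (Complex.I * (lam * n₁ * l₂)) • a (n₁ + n₂) (l₁ + l₂))
    (D : Type) [AddCommGroup D] [Module ℂ D]
    (dd : ℤ → ℤ → ℤ → D)
    (bd : Module.Basis (ℤ × ℤ × ℤ) ℂ D) (hbd : ∀ n₁ n₂ l : ℤ, bd (n₁, n₂, l) = dd n₁ n₂ l)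
    (rhoL : TensorProduct ℂ A A →ₐ[ℂ] Module.End ℂ D)
    (rhoR : Aᵐᵒᵖ →ₐ[ℂ] Module.End ℂ D)
    (hL : ∀ m₁ j₁ m₂ j₂ n₁ n₂ l : ℤ,
      rhoL (a m₁ j₁ ⊗ₜ[ℂ] a m₂ j₂) (dd n₁ n₂ l) =
        Complex.exp (-(Complex.I *
            (lam * (((n₁ + m₁) * j₁ + (n₂ + m₂) * j₂ : ℤ) : ℝ)))) •
          dd (n₁ + m₁) (n₂ + m₂) (l - j₁ - j₂))
    (hR : ∀ m j n₁ n₂ l : ℤ,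
      rhoR (MulOpposite.op (a m j)) (dd n₁ n₂ l) =
        Complex.exp (Complex.I * (lam * (((m * (l - j)) : ℤ) : ℝ))) •
          dd (n₁ + m) (n₂ + m) (l - j))
    (E : Type) [AddCommGroup E] [Module ℂ E]
    (ee : ℤ → E) (be : Module.Basis ℤ ℂ E) (hbe : ∀ l : ℤ, be l = ee l)
    (rhoE : Aᵐᵒᵖ →ₐ[ℂ] Module.End ℂ E)
    (hE : ∀ m j l : ℤ,
      rhoE (MulOpposite.op (a m j)) (ee l) =
        Complex.exp (Complex.I * (lam * (((m * (l - j)) : ℤ) : ℝ))) • ee (l - j)) :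
    (∃ Φ : (TensorProduct ℂ (TensorProduct ℂ E A) D ⧸ counitRelL rhoL rhoE) ≃ₗ[ℂ] A,
      ∀ c : A, ∀ z,
        Φ (Submodule.Quotient.mk (counitLactL c z)) = c * Φ (Submodule.Quotient.mk z) ∧
        Φ (Submodule.Quotient.mk (counitRactL rhoR c z)) = Φ (Submodule.Quotient.mk z) * c) ∧
    (∃ Ψ : (@HasQuotient.Quotient (TensorProduct ℂ (TensorProduct ℂ A E) D) _ Submodule.hasQuotient (counitRelR rhoL rhoE)) ≃ₗ[ℂ] A,
      ∀ c : A, ∀ z,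
        Ψ (Submodule.Quotient.mk (counitLactR c z)) = c * Ψ (Submodule.Quotient.mk z) ∧
        Ψ (Submodule.Quotient.mk (counitRactR rhoR c z)) = Ψ (Submodule.Quotient.mk z) * c) := by
  obtain rfl : a = fun n l => b (n, l) := funext₂ fun n l => (hb n l).symm
  obtain rfl : ee = ⇑be := funext fun l => (hbe l).symm
  obtain rfl : dd = fun n₁ n₂ l => bd (n₁, n₂, l) := funext₃ fun n₁ n₂ l => (hbd n₁ n₂ l).symm
  exact ⟨counit_axiom_left hmul hL hR hE, counit_axiom_right hmul hL hR hE⟩
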